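/- Let H be a nonzero complex Hilbert space, A a bounded linear operator on H, and ε > 0. Suppose γ_n : ℂ → [0, ∞) is a sequence of functions converging to γ(·, A) uniformly on every compact subset of ℂ, and suppose there exists N₀ ∈ ℕ such that γ_n(z) ≥ γ(z, A) for all n ≥ N₀ and all z ∈ ℂ. Define Γ_nᵉ := {z ∈ Grid(n) : γ_n(z) < ε}. Then: (i) Γ_nᵉ ⊆ Sp_ε(A) for all n ≥ N₀; and (ii) for every δ > 0 there exists N such that for all n ≥ N, every point of Sp_ε(A) lies within distance δ of some point of Γ_nᵉ. In particular, the Hausdorff distance between Γ_nᵉ and Sp_ε(A) tends to 0 as n → ∞. -/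

import Mathlib

open Filter Topology

/-- The injection modulus `σ₁(T) = inf {‖Tx‖ : ‖x‖ = 1}` of a bounded operator. -/
noncomputable def injMod {H : Type*} [NormedAddCommGroup H] [InnerProductSpace ℂ H]
    (T : H →L[ℂ] H) : ℝ :=
  sInf ((fun x => ‖T x‖) '' {x : H | ‖x‖ = 1})

/-- `γ(z, A) = min {σ₁(A - zI), σ₁(A* - z̄I)}`. -/
noncomputable def gammaFn {H : Type*} [NormedAddCommGroup H] [InnerProductSpace ℂ H]
    [CompleteSpace H] (z : ℂ) (A : H →L[ℂ] H) : ℝ :=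
  min (injMod (A - z • (1 : H →L[ℂ] H)))
    (injMod (ContinuousLinearMap.adjoint A - (starRingEnd ℂ) z • (1 : H →L[ℂ] H)))

/-- The `ε`-pseudospectrum `Sp_ε(A) = closure {z : γ(z, A) < ε}`. -/
noncomputable def pseudoSpec {H : Type*} [NormedAddCommGroup H] [InnerProductSpace ℂ H]
    [CompleteSpace H] (ε : ℝ) (A : H →L[ℂ] H) : Set ℂ :=
  closure {z : ℂ | gammaFn z A < ε}

/-- `Grid(n) = {(a + ib)/n : a, b ∈ ℤ, |(a + ib)/n| ≤ n}`. -/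
def grid (n : ℕ) : Set ℂ :=
  {z : ℂ | (∃ a b : ℤ, z = ((a : ℂ) + (b : ℂ) * Complex.I) / (n : ℂ)) ∧ ‖z‖ ≤ n}

/-!
Lower bounds of the form `c ≤ ‖(A - z) x‖` are stable under perturbation, so `γ(·, A)` is
1-Lipschitz, and `γ(z, A) ≥ ‖z‖ - ‖A‖` confines `Sp_ε(A)` to a compact disc. Part (i) is
immediate from `γ_n ≥ γ(·, A)`. For part (ii), compactness of `Sp_ε(A)` gives a uniform
margin `η > 0`: every point of `Sp_ε(A)` is `δ/2`-close to some `z` with `γ(z, A) < ε - η`.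
A grid point `u` within `2/n` of `z` then has `γ(u, A) < ε - η/2`, and once `γ_n` is
`η/2`-close to `γ(·, A)` on a disc containing these points, `γ_n(u) < ε`. The Hausdorff
statement combines (i) and (ii).
-/

open Metric

section InjMod

variable {H : Type*} [NormedAddCommGroup H] [InnerProductSpace ℂ H]

lemma injMod_le_norm_apply (T : H →L[ℂ] H) {x : H} (hx : ‖x‖ = 1) : injMod T ≤ ‖T x‖ :=
  csInf_le ⟨0, fun _ ⟨_, _, hy⟩ => hy ▸ norm_nonneg _⟩ ⟨x, hx, rfl⟩

variable [Nontrivial H]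

lemma le_injMod (T : H →L[ℂ] H) {c : ℝ} (h : ∀ x : H, ‖x‖ = 1 → c ≤ ‖T x‖) :
    c ≤ injMod T := by
  obtain ⟨x, hx⟩ := exists_norm_eq H zero_le_one
  exact le_csInf ⟨_, x, hx, rfl⟩ fun _ ⟨y, hy, hr⟩ => hr ▸ h y hy

lemma injMod_le_injMod_add_norm_sub (T S : H →L[ℂ] H) :
    injMod T ≤ injMod S + ‖T - S‖ := by
  suffices injMod T - ‖T - S‖ ≤ injMod S by linarith
  refine le_injMod S fun x hx => ?_
  calc injMod T - ‖T - S‖ ≤ ‖T x‖ - ‖(T - S) x‖ := by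
        gcongr
        · exact injMod_le_norm_apply T hx
        · simpa [hx] using (T - S).le_opNorm x
    _ ≤ ‖T x - (T - S) x‖ := norm_sub_norm_le _ _
    _ = ‖S x‖ := by simp

lemma injMod_sub_smul_le (B : H →L[ℂ] H) (v w : ℂ) :
    injMod (B - v • 1) ≤ injMod (B - w • 1) + ‖v - w‖ := by
  have h := injMod_le_injMod_add_norm_sub (B - v • 1) (B - w • 1)
  rwa [sub_sub_sub_cancel_left, ← sub_smul, norm_smul, norm_one, mul_one, norm_sub_rev] at h

lemma norm_sub_norm_le_injMod_sub_smul (B : H →L[ℂ] H) (v : ℂ) :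
    ‖v‖ - ‖B‖ ≤ injMod (B - v • 1) := by
  refine le_injMod _ fun x hx => ?_
  have hBx : ‖B x‖ ≤ ‖B‖ := by simpa [hx] using B.le_opNorm x
  calc ‖v‖ - ‖B‖ ≤ ‖v • x‖ - ‖B x‖ := by rw [norm_smul, hx, mul_one]; linarith
    _ ≤ ‖B x - v • x‖ := by rw [norm_sub_rev]; exact norm_sub_norm_le _ _
    _ = ‖(B - v • 1) x‖ := by simp

end InjMod

section GammaFn

variable {H : Type*} [NormedAddCommGroup H] [InnerProductSpace ℂ H] [CompleteSpace H]
  [Nontrivial H]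

lemma gammaFn_le_add_norm_sub (A : H →L[ℂ] H) (u z : ℂ) :
    gammaFn u A ≤ gammaFn z A + ‖u - z‖ := by
  have hadj := injMod_sub_smul_le (ContinuousLinearMap.adjoint A)
    ((starRingEnd ℂ) u) ((starRingEnd ℂ) z)
  rw [← map_sub, Complex.norm_conj] at hadj
  rw [gammaFn, gammaFn, ← min_add_add_right]
  exact min_le_min (injMod_sub_smul_le A u z) hadj

lemma norm_sub_norm_le_gammaFn (A : H →L[ℂ] H) (z : ℂ) : ‖z‖ - ‖A‖ ≤ gammaFn z A := by
  have hadj := norm_sub_norm_le_injMod_sub_smul (ContinuousLinearMap.adjoint A)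
    ((starRingEnd ℂ) z)
  rw [Complex.norm_conj, LinearIsometryEquiv.norm_map] at hadj
  exact le_min (norm_sub_norm_le_injMod_sub_smul A z) hadj

lemma norm_lt_of_gammaFn_lt (A : H →L[ℂ] H) {ε : ℝ} {z : ℂ} (hz : gammaFn z A < ε) :
    ‖z‖ < ‖A‖ + ε := by
  linarith [norm_sub_norm_le_gammaFn A z]

lemma isCompact_pseudoSpec (A : H →L[ℂ] H) (ε : ℝ) : IsCompact (pseudoSpec ε A) := by
  have hball : {z : ℂ | gammaFn z A < ε} ⊆ closedBall 0 (‖A‖ + ε) := fun z hz => by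
    simpa using (norm_lt_of_gammaFn_lt A hz).le
  exact isCompact_of_isClosed_isBounded isClosed_closure
    (isBounded_closedBall.subset (closure_minimal hball isClosed_closedBall))

end GammaFn

lemma abs_sub_floor_mul_div_le {n : ℕ} (hn : 0 < n) (x : ℝ) :
    |x - ⌊n * x⌋ / n| ≤ 1 / n := by
  have hn' : (0 : ℝ) < n := Nat.cast_pos.mpr hn
  have h : x - ⌊n * x⌋ / n = Int.fract (n * x) / n := by
    rw [← Int.self_sub_floor]; field_simp
  rw [h, abs_of_nonneg (by positivity)]
  exact div_le_div_of_nonneg_right (Int.fract_lt_one _).le hn'.le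

lemma exists_int_norm_sub_div_le {n : ℕ} (hn : 0 < n) (z : ℂ) :
    ∃ a b : ℤ, ‖z - ((a : ℂ) + (b : ℂ) * Complex.I) / (n : ℂ)‖ ≤ 2 / n := by
  refine ⟨⌊n * z.re⌋, ⌊n * z.im⌋, (Complex.norm_le_abs_re_add_abs_im _).trans ?_⟩
  have hre := abs_sub_floor_mul_div_le hn z.re
  have him := abs_sub_floor_mul_div_le hn z.im
  simp only [Complex.sub_re, Complex.sub_im, Complex.div_natCast_re, Complex.div_natCast_im,
    Complex.add_re, Complex.add_im, Complex.mul_re, Complex.mul_im, Complex.intCast_re,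
    Complex.intCast_im, Complex.I_re, Complex.I_im, mul_zero, mul_one, sub_zero, add_zero,
    zero_add]
  linarith [show (2 : ℝ) / n = 1 / n + 1 / n by ring]

lemma eventually_exists_mem_grid_dist_lt (R : ℝ) {ρ : ℝ} (hρ : 0 < ρ) :
    ∀ᶠ n : ℕ in atTop, ∀ z : ℂ, ‖z‖ ≤ R → ∃ u ∈ grid n, dist z u < ρ := by
  filter_upwards [(tendsto_const_div_atTop_nhds_zero_nat (2 : ℝ)).eventually_lt_const hρ,
    tendsto_natCast_atTop_atTop.eventually_ge_atTop (R + ρ), eventually_gt_atTop 0]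
    with n hρn hRn hn z hz
  obtain ⟨a, b, hab⟩ := exists_int_norm_sub_div_le hn z
  refine ⟨_, ⟨⟨a, b, rfl⟩, ?_⟩, by rw [Complex.dist_eq]; linarith⟩
  linarith [norm_le_norm_add_norm_sub z (((a : ℂ) + (b : ℂ) * Complex.I) / (n : ℂ))]

section MetricSpace

variable {X : Type*} [PseudoMetricSpace X]

lemma IsCompact.exists_pos_forall_exists_dist_lt {K : Set X} (hK : IsCompact K) {f : X → ℝ}
    {ε δ : ℝ} (hKf : K ⊆ closure {x | f x < ε}) (hδ : 0 < δ) :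
    ∃ η > 0, ∀ w ∈ K, ∃ z, f z < ε - η ∧ dist w z < δ := by
  let U : ℕ → Set X := fun k => thickening δ {x | f x < ε - 1 / (k + 1)}
  have hcover : K ⊆ ⋃ k, U k := fun w hw => by
    obtain ⟨z, hz, hwz⟩ := mem_closure_iff.mp (hKf hw) δ hδ
    obtain ⟨k, hk⟩ := exists_nat_one_div_lt (sub_pos.mpr (show f z < ε from hz))
    exact Set.mem_iUnion.mpr ⟨k, mem_thickening_iff.mpr ⟨z, show f z < _ by linarith, hwz⟩⟩
  have hmono : Monotone U := fun k l hkl =>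
    thickening_subset_of_subset δ fun x (hx : f x < _) =>
      show f x < _ by linarith [Nat.one_div_le_one_div (α := ℝ) hkl]
  obtain ⟨k, hk⟩ := hK.elim_directed_cover U (fun _ => isOpen_thickening) hcover hmono.directed_le
  exact ⟨1 / (k + 1), by positivity, fun w hw => mem_thickening_iff.mp (hk hw)⟩

lemma tendsto_hausdorffDist_zero_of_eventually_subset {ι : Type*} {l : Filter ι}
    {s : ι → Set X} {t : Set X}
    (hsub : ∀ᶠ i in l, s i ⊆ t)
    (happrox : ∀ δ > 0, ∀ᶠ i in l, ∀ w ∈ t, ∃ u ∈ s i, dist w u ≤ δ) :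
    Tendsto (fun i => hausdorffDist (s i) t) l (𝓝 0) := by
  refine tendsto_order.2 ⟨fun e he => .of_forall fun _ => he.trans_le hausdorffDist_nonneg,
    fun e he => ?_⟩
  filter_upwards [hsub, happrox (e / 2) (half_pos he)] with i hsi hi
  have hself : ∀ x ∈ s i, ∃ y ∈ t, dist x y ≤ e / 2 :=
    fun x hx => ⟨x, hsi hx, by simpa using (half_pos he).le⟩
  exact (hausdorffDist_le_of_mem_dist (half_pos he).le hself hi).trans_lt (half_lt_self he)

end MetricSpace

lemma eventually_forall_mem_pseudoSpec_exists_dist_le {H : Type*} [NormedAddCommGroup H]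
    [InnerProductSpace ℂ H] [CompleteSpace H] [Nontrivial H] (A : H →L[ℂ] H) (ε : ℝ)
    (γn : ℕ → ℂ → ℝ)
    (hconv : ∀ K : Set ℂ, IsCompact K →
      TendstoUniformlyOn γn (fun z => gammaFn z A) atTop K)
    {δ : ℝ} (hδ : 0 < δ) :
    ∀ᶠ n in atTop, ∀ w ∈ pseudoSpec ε A, ∃ u ∈ {z ∈ grid n | γn n z < ε}, dist w u ≤ δ := by
  obtain ⟨η, hη, hmargin⟩ :=
    (isCompact_pseudoSpec A ε).exists_pos_forall_exists_dist_lt subset_rfl (half_pos hδ)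
  filter_upwards [tendstoUniformlyOn_iff.mp (hconv _ (isCompact_closedBall 0 (‖A‖ + ε + η)))
      (η / 2) (half_pos hη),
    eventually_exists_mem_grid_dist_lt (‖A‖ + ε) (lt_min (half_pos hη) (half_pos hδ))]
    with n hclose hgrid w hw
  obtain ⟨z, hz, hwz⟩ := hmargin w hw
  have hzR : ‖z‖ ≤ ‖A‖ + ε := (norm_lt_of_gammaFn_lt A (hz.trans_le (sub_le_self _ hη.le))).le
  obtain ⟨u, hu, hzu⟩ := hgrid z hzR
  have huz : ‖u - z‖ < η / 2 := by
    rw [← dist_eq_norm, dist_comm]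
    exact hzu.trans_le (min_le_left _ _)
  have huK : u ∈ closedBall 0 (‖A‖ + ε + η) := by
    rw [mem_closedBall, dist_zero_right]
    linarith [norm_le_insert' u z]
  have hγu : gammaFn u A < ε - η / 2 := by linarith [gammaFn_le_add_norm_sub A u z]
  have hγnu : γn n u < ε := by
    have h := hclose u huK
    rw [Real.dist_eq, abs_sub_lt_iff] at h
    linarith
  exact ⟨u, ⟨hu, hγnu⟩, by linarith [dist_triangle w z u, min_le_right (η / 2) (δ / 2)]⟩

theorem pseudospectrum_algorithm_convergence_general
    {H : Type*} [NormedAddCommGroup H] [InnerProductSpace ℂ H] [CompleteSpace H]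
    [Nontrivial H] (A : H →L[ℂ] H) (ε : ℝ)
    (γn : ℕ → ℂ → ℝ)
    (hconv : ∀ K : Set ℂ, IsCompact K →
      TendstoUniformlyOn (fun n z => γn n z) (fun z => gammaFn z A) atTop K)
    (N₀ : ℕ) (hN₀ : ∀ n ≥ N₀, ∀ z : ℂ, gammaFn z A ≤ γn n z) :
    (∀ n ≥ N₀, {z ∈ grid n | γn n z < ε} ⊆ pseudoSpec ε A) ∧
      (∀ δ > (0 : ℝ), ∃ N : ℕ, ∀ n ≥ N, ∀ w ∈ pseudoSpec ε A,
        ∃ u ∈ {z ∈ grid n | γn n z < ε}, ‖w - u‖ ≤ δ) ∧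
      Tendsto (fun n => Metric.hausdorffDist {z ∈ grid n | γn n z < ε} (pseudoSpec ε A))
        atTop (𝓝 0) := by
  have hsub : ∀ n ≥ N₀, {z ∈ grid n | γn n z < ε} ⊆ pseudoSpec ε A :=
    fun n hn z hz => subset_closure ((hN₀ n hn z).trans_lt hz.2)
  have happrox := fun δ (hδ : 0 < δ) =>
    eventually_forall_mem_pseudoSpec_exists_dist_le A ε γn hconv hδ
  refine ⟨hsub, fun δ hδ => ?_,
    tendsto_hausdorffDist_zero_of_eventually_subset (eventually_atTop.mpr ⟨N₀, hsub⟩) happrox⟩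
  obtain ⟨N, hN⟩ := eventually_atTop.mp (happrox δ hδ)
  exact ⟨N, fun n hn w hw => by simpa only [Complex.dist_eq] using hN n hn w hw⟩

/-- If `γ_n → γ(·, A)` uniformly on compacts and `γ_n ≥ γ(·, A)` for
`n ≥ N₀`, then `Γ_nᵉ = {z ∈ Grid(n) : γ_n(z) < ε}` satisfies: (i) `Γ_nᵉ ⊆ Sp_ε(A)` for
`n ≥ N₀`; (ii) every point of `Sp_ε(A)` is eventually within `δ` of `Γ_nᵉ`; in particular,
the Hausdorff distance between `Γ_nᵉ` and `Sp_ε(A)` tends to `0`. -/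
theorem pseudospectrum_algorithm_convergence
    {H : Type*} [NormedAddCommGroup H] [InnerProductSpace ℂ H] [CompleteSpace H]
    [Nontrivial H] (A : H →L[ℂ] H) (ε : ℝ) (hε : 0 < ε)
    (γn : ℕ → ℂ → ℝ) (hpos : ∀ (n : ℕ) (z : ℂ), 0 ≤ γn n z)
    (hconv : ∀ K : Set ℂ, IsCompact K →
      TendstoUniformlyOn (fun n z => γn n z) (fun z => gammaFn z A) atTop K)
    (N₀ : ℕ) (hN₀ : ∀ n ≥ N₀, ∀ z : ℂ, gammaFn z A ≤ γn n z) :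
    (∀ n ≥ N₀, {z ∈ grid n | γn n z < ε} ⊆ pseudoSpec ε A) ∧
      (∀ δ > (0 : ℝ), ∃ N : ℕ, ∀ n ≥ N, ∀ w ∈ pseudoSpec ε A,
        ∃ u ∈ {z ∈ grid n | γn n z < ε}, ‖w - u‖ ≤ δ) ∧
      Tendsto (fun n => Metric.hausdorffDist {z ∈ grid n | γn n z < ε} (pseudoSpec ε A))
        atTop (𝓝 0) :=
  pseudospectrum_algorithm_convergence_general A ε γn hconv N₀ hN₀
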